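/- arXiv:1703.01617 — 4 statements merged into one kernel-verified Lean document; each statement's English description precedes it below -/
import Mathlib

section
/- Let ℒ be the differential operator ℒ = uγΔ_v − γ v·∇_v − u∇U(x)·∇_v + v·∇_x on functions of (x,v) ∈ ℝ^{2d}. Suppose the drift condition x·∇U(x)/2 ≥ λ(U(x) + u⁻¹γ²|x|²/4) − A holds. Then the Lyapunov function H(x,v) = U(x) + (1/4)u⁻¹γ²(|x+γ⁻¹v|² + |γ⁻¹v|² − λ|x|²) satisfies ℒH(x,v) ≤ γ(d + A − λH(x,v)) for all (x,v). -/
open scoped RealInnerProductSpace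

set_option maxHeartbeats 1000000 in
/-- The generator `ℒ = uγΔ_v − γ v·∇_v − u∇U(x)·∇_v + v·∇_x` applied to the
Lyapunov function `H(x,v) = U(x) + (1/4)u⁻¹γ²(|x+γ⁻¹v|² + |γ⁻¹v|² − λ|x|²)`,
written out explicitly using `Δ_v H = u⁻¹ d`, `∇_v H = (1/2)u⁻¹γ(x + 2γ⁻¹v)`,
`∇_x H = ∇U(x) + (1/2)u⁻¹γ²((x+γ⁻¹v) − λx)`. -/
theorem generator_lyapunov_bound
    (d : ℕ) (U : EuclideanSpace ℝ (Fin d) → ℝ)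
    (g : EuclideanSpace ℝ (Fin d) → EuclideanSpace ℝ (Fin d))
    (u γ L A lam : ℝ)
    (hu : 0 < u) (hγ : 0 < γ) (hL : 0 < L) (hA : 0 < A)
    (hlam : lam ∈ Set.Ioc (0 : ℝ) (1/4))
    (hgrad : ∀ x, HasGradientAt U (g x) x)
    (hU0 : ∀ x, 0 ≤ U x)
    (hdrift : ∀ x, ⟪x, g x⟫ / 2 ≥ lam * (U x + u⁻¹ * γ^2 * ‖x‖^2 / 4) - A)
    (H LH : EuclideanSpace ℝ (Fin d) → EuclideanSpace ℝ (Fin d) → ℝ)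
    (hH : ∀ x v, H x v =
      U x + (1/4) * u⁻¹ * γ^2 *
        (‖x + γ⁻¹ • v‖^2 + ‖γ⁻¹ • v‖^2 - lam * ‖x‖^2))
    (hLH : ∀ x v, LH x v =
      u * γ * (u⁻¹ * d)
      - γ * ⟪v, ((1/2) * u⁻¹ * γ) • (x + (2 * γ⁻¹) • v)⟫
      - u * ⟪g x, ((1/2) * u⁻¹ * γ) • (x + (2 * γ⁻¹) • v)⟫
      + ⟪v, g x + ((1/2) * u⁻¹ * γ^2) • ((x + γ⁻¹ • v) - lam • x)⟫) :
    ∀ x v, LH x v ≤ γ * (d + A - lam * H x v) := by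
  intro x v
  obtain ⟨hlam0, hlam4⟩ := hlam
  have hd := hdrift x
  rw [hLH, hH]
  simp only [@norm_add_sq_real, norm_smul, Real.norm_eq_abs, abs_of_pos (inv_pos.mpr hγ),
    inner_add_right, inner_sub_right, real_inner_smul_right,
    real_inner_self_eq_norm_sq, mul_pow]
  rw [real_inner_comm x v, real_inner_comm x (g x), real_inner_comm v (g x)]
  have hγ0 : γ ≠ 0 := ne_of_gt hγ
  have hu0 : u ≠ 0 := ne_of_gt hu
  have E : u * γ * (u⁻¹ * ↑d) - γ * (1 / 2 * u⁻¹ * γ * (⟪x, v⟫ + 2 * γ⁻¹ * ‖v‖ ^ 2)) -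
        u * (1 / 2 * u⁻¹ * γ * (⟪x, g x⟫ + 2 * γ⁻¹ * ⟪v, g x⟫)) +
      (⟪v, g x⟫ + 1 / 2 * u⁻¹ * γ ^ 2 * (⟪x, v⟫ + γ⁻¹ * ‖v‖ ^ 2 - lam * ⟪x, v⟫))
    - γ * ((d:ℝ) + A - lam * (U x +
            1 / 4 * u⁻¹ * γ ^ 2 *
              (‖x‖ ^ 2 + 2 * (γ⁻¹ * ⟪x, v⟫) + γ⁻¹ ^ 2 * ‖v‖ ^ 2 + γ⁻¹ ^ 2 * ‖v‖ ^ 2 - lam * ‖x‖ ^ 2)))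
    = γ * lam * U x + lam * (1 - lam)/4 * u⁻¹ * γ^3 * ‖x‖^2
      - (1 - lam)/2 * u⁻¹ * γ * ‖v‖^2 - γ/2 * ⟪x, g x⟫ - γ * A := by
    field_simp
    ring
  have hd2 : γ * (lam * (U x + u⁻¹ * γ^2 * ‖x‖^2 / 4) - A) ≤ γ * (⟪x, g x⟫ / 2) :=
    mul_le_mul_of_nonneg_left hd hγ.le
  have hx : 0 ≤ lam^2/4 * u⁻¹ * γ^3 * ‖x‖^2 := by positivity
  have h1l : 0 ≤ 1 - lam := by linarith
  have hv : 0 ≤ (1-lam)/2 * u⁻¹ * γ * ‖v‖^2 := by positivity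
  nlinarith [E, hd2, hx, hv]
end

section
/- Define r((x,v),(x',v')) = α|x−x'| + |x−x' + γ⁻¹(v−v')| for (x,v),(x',v') ∈ ℝ^{2d}, and let H(x,v) = U(x) + (1/4)u⁻¹γ²(|x+γ⁻¹v|² + |γ⁻¹v|² − λ|x|²) with U ≥ 0, λ ∈ (0,1/4]. Then r((x,v),(x',v'))² ≤ 8((1+α)² + α²)(1−2λ)⁻¹ u γ⁻² (H(x,v) + H(x',v')). -/
set_option maxHeartbeats 1000000


theorem semimetric_lyapunov_bound
    (d : ℕ) (U : EuclideanSpace ℝ (Fin d) → ℝ)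
    (α u γ lam : ℝ) (hα : 0 < α) (hu : 0 < u) (hγ : 0 < γ)
    (hlam : lam ∈ Set.Ioc (0 : ℝ) (1/4))
    (hU0 : ∀ x, 0 ≤ U x)
    (H : EuclideanSpace ℝ (Fin d) → EuclideanSpace ℝ (Fin d) → ℝ)
    (hH : ∀ x v, H x v =
      U x + (1/4) * u⁻¹ * γ^2 *
        (‖x + γ⁻¹ • v‖^2 + ‖γ⁻¹ • v‖^2 - lam * ‖x‖^2))
    (r : (EuclideanSpace ℝ (Fin d) × EuclideanSpace ℝ (Fin d)) →
         (EuclideanSpace ℝ (Fin d) × EuclideanSpace ℝ (Fin d)) → ℝ)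
    (hr : ∀ x v x' v', r (x, v) (x', v') =
      α * ‖x - x'‖ + ‖x - x' + γ⁻¹ • (v - v')‖) :
    ∀ x v x' v',
      r (x, v) (x', v') ^ 2 ≤
        8 * ((1 + α)^2 + α^2) * (1 - 2*lam)⁻¹ * u * γ⁻¹^2 *
          (H x v + H x' v') := by
  intro x v x' v'
  obtain ⟨hlam0, hlam4⟩ := hlam
  set a : EuclideanSpace ℝ (Fin d) := x + γ⁻¹ • v with ha
  set b : EuclideanSpace ℝ (Fin d) := γ⁻¹ • v with hb
  set a' : EuclideanSpace ℝ (Fin d) := x' + γ⁻¹ • v' with ha'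
  set b' : EuclideanSpace ℝ (Fin d) := γ⁻¹ • v' with hb'
  set C : ℝ := (1 + α)^2 + α^2 with hC
  set K : ℝ := 1 - 2*lam with hK
  have hK0 : 0 < K := by simp only [hK]; linarith
  have hxx : x - x' = (a - a') - (b - b') := by
    simp only [ha, ha', hb, hb']; abel
  have hsum : x - x' + γ⁻¹ • (v - v') = a - a' := by
    rw [smul_sub]; simp only [ha, ha', hb, hb']; abel
  have hxab : x = a - b := by simp only [ha, hb]; abel
  have hxab' : x' = a' - b' := by simp only [ha', hb']; abel
  -- Step 1: r ≤ (1+α)‖a-a'‖ + α‖b-b'‖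
  have h1 : r (x, v) (x', v') ≤ (1 + α) * ‖a - a'‖ + α * ‖b - b'‖ := by
    rw [hr, hsum, hxx]
    have := norm_sub_le (a - a') (b - b')
    nlinarith [norm_nonneg (a - a'), norm_nonneg (b - b')]
  have hr0 : 0 ≤ r (x, v) (x', v') := by
    rw [hr]
    positivity
  -- Step 2: Cauchy-Schwarz
  have h2 : r (x, v) (x', v') ^ 2 ≤ C * (‖a - a'‖^2 + ‖b - b'‖^2) := by
    have hsq : r (x, v) (x', v') ^ 2 ≤ ((1 + α) * ‖a - a'‖ + α * ‖b - b'‖)^2 :=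
      pow_le_pow_left₀ hr0 h1 2
    refine hsq.trans ?_
    nlinarith [sq_nonneg ((1 + α) * ‖b - b'‖ - α * ‖a - a'‖)]
  -- Step 3: difference norms squared
  have h3a : ‖a - a'‖^2 ≤ 2 * (‖a‖^2 + ‖a'‖^2) := by
    have := norm_sub_le a a'
    nlinarith [norm_nonneg (a - a'), sq_nonneg (‖a‖ - ‖a'‖)]
  have h3b : ‖b - b'‖^2 ≤ 2 * (‖b‖^2 + ‖b'‖^2) := by
    have := norm_sub_le b b'
    nlinarith [norm_nonneg (b - b'), sq_nonneg (‖b‖ - ‖b'‖)]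
  -- Step 4: Lyapunov lower bounds
  have hxsq : ‖x‖^2 ≤ 2 * (‖a‖^2 + ‖b‖^2) := by
    rw [hxab]
    have := norm_sub_le a b
    nlinarith [norm_nonneg (a - b), sq_nonneg (‖a‖ - ‖b‖)]
  have hxsq' : ‖x'‖^2 ≤ 2 * (‖a'‖^2 + ‖b'‖^2) := by
    rw [hxab']
    have := norm_sub_le a' b'
    nlinarith [norm_nonneg (a' - b'), sq_nonneg (‖a'‖ - ‖b'‖)]
  have hu' : 0 < u⁻¹ := by positivity
  have hγ2 : 0 < γ^2 := by positivity
  have h4 : (1/4) * K * u⁻¹ * γ^2 * (‖a‖^2 + ‖b‖^2) ≤ H x v := by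
    rw [hH]
    have hU := hU0 x
    have key : K * (‖a‖^2 + ‖b‖^2) ≤ ‖a‖^2 + ‖b‖^2 - lam * ‖x‖^2 := by
      simp only [hK]; nlinarith
    have hc : (0:ℝ) ≤ (1/4) * u⁻¹ * γ^2 := by positivity
    have hm := mul_le_mul_of_nonneg_left key hc
    have heq : (1/4) * K * u⁻¹ * γ^2 * (‖a‖^2 + ‖b‖^2)
        = (1/4) * u⁻¹ * γ^2 * (K * (‖a‖^2 + ‖b‖^2)) := by ring
    linarith [heq ▸ hm]
  have h4' : (1/4) * K * u⁻¹ * γ^2 * (‖a'‖^2 + ‖b'‖^2) ≤ H x' v' := by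
    rw [hH]
    have hU := hU0 x'
    have key : K * (‖a'‖^2 + ‖b'‖^2) ≤ ‖a'‖^2 + ‖b'‖^2 - lam * ‖x'‖^2 := by
      simp only [hK]; nlinarith
    have hc : (0:ℝ) ≤ (1/4) * u⁻¹ * γ^2 := by positivity
    have hm := mul_le_mul_of_nonneg_left key hc
    have heq : (1/4) * K * u⁻¹ * γ^2 * (‖a'‖^2 + ‖b'‖^2)
        = (1/4) * u⁻¹ * γ^2 * (K * (‖a'‖^2 + ‖b'‖^2)) := by ring
    linarith [heq ▸ hm]
  -- Final combination
  set S : ℝ := ‖a‖^2 + ‖b‖^2 + ‖a'‖^2 + ‖b'‖^2 with hS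
  have hmid : r (x, v) (x', v') ^ 2 ≤ 2 * C * S := by
    have hC0 : 0 ≤ C := by positivity
    have h5 : ‖a - a'‖^2 + ‖b - b'‖^2 ≤ 2 * S := by simp only [hS]; linarith
    have := mul_le_mul_of_nonneg_left h5 hC0
    linarith
  have hfin : 2 * C * S ≤ 8 * C * K⁻¹ * u * γ⁻¹^2 * (H x v + H x' v') := by
    have hpos : 0 < 8 * C * K⁻¹ * u * γ⁻¹^2 := by positivity
    have hHsum : (1/4) * K * u⁻¹ * γ^2 * S ≤ H x v + H x' v' := by
      simp only [hS]; linarith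
    calc 2 * C * S = 8 * C * K⁻¹ * u * γ⁻¹^2 * ((1/4) * K * u⁻¹ * γ^2 * S) := by
          field_simp; ring
      _ ≤ 8 * C * K⁻¹ * u * γ⁻¹^2 * (H x v + H x' v') := by
          exact mul_le_mul_of_nonneg_left hHsum (le_of_lt hpos)
  exact hmid.trans hfin
end

section
/- Let φ(s) ≥ e⁻²exp(−Ls²/8) and φ(s) ≤ exp(−Ls²/8) on [0,R₁], Φ(r) = ∫₀^r φ, and Λ = LR₁²/8. Then ∫₀^{R₁} Φ(s)/φ(s) ds ≤ 4√π e² L⁻¹ Λ^{−1/2} e^{Λ}. -/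
open Real MeasureTheory intervalIntegral Set

theorem int_Phi_over_phi_bound
    (L R₁ : ℝ) (hL : 0 < L) (hR₁ : 0 < R₁)
    (Λ : ℝ) (hΛ : Λ = L * R₁^2 / 8)
    (φ : ℝ → ℝ) (hcont : ContinuousOn φ (Set.Icc 0 R₁))
    (hlow : ∀ s ∈ Set.Icc (0:ℝ) R₁,
      Real.exp (-2) * Real.exp (-L * s^2 / 8) ≤ φ s)
    (hupp : ∀ s ∈ Set.Icc (0:ℝ) R₁, φ s ≤ Real.exp (-L * s^2 / 8)) :
    (∫ s in (0:ℝ)..R₁, (∫ t in (0:ℝ)..s, φ t) / φ s) ≤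
      4 * Real.sqrt Real.pi * Real.exp 2 * L⁻¹ * (Real.sqrt Λ)⁻¹ *
        Real.exp Λ := by
  have hΛpos : 0 < Λ := by rw [hΛ]; positivity
  have hpos : ∀ s ∈ Set.Icc (0:ℝ) R₁, 0 < φ s := fun s hs =>
    lt_of_lt_of_le (by positivity) (hlow s hs)
  set G : ℝ := ∫ t in (0:ℝ)..R₁, Real.exp (-L * t^2 / 8) with hG
  have hGnn : 0 ≤ G := intervalIntegral.integral_nonneg hR₁.le (fun t _ => (Real.exp_pos _).le)
  -- integrability of the gaussian upper bound on 0..R₁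
  have hexpint : IntervalIntegrable (fun t => Real.exp (-L * t^2 / 8)) volume 0 R₁ :=
    (Continuous.intervalIntegrable (by fun_prop) 0 R₁)
  have hφint : ∀ s ∈ Set.Icc (0:ℝ) R₁, IntervalIntegrable φ volume 0 s := by
    intro s hs
    apply ContinuousOn.intervalIntegrable
    rw [Set.uIcc_of_le hs.1]
    exact hcont.mono (Set.Icc_subset_Icc le_rfl hs.2)
  -- Φ(s) ≤ G
  have hΦleG : ∀ s ∈ Set.Icc (0:ℝ) R₁, (∫ t in (0:ℝ)..s, φ t) ≤ G := by
    intro s hs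
    calc (∫ t in (0:ℝ)..s, φ t) ≤ ∫ t in (0:ℝ)..s, Real.exp (-L * t^2 / 8) := by
          apply intervalIntegral.integral_mono_on hs.1 (hφint s hs)
            (Continuous.intervalIntegrable (by fun_prop) 0 s)
          intro t ht
          exact hupp t ⟨ht.1, ht.2.trans hs.2⟩
      _ ≤ G := by
          apply intervalIntegral.integral_mono_interval le_rfl hs.1 hs.2 _ hexpint
          filter_upwards with t using (Real.exp_pos _).le
  -- pointwise bound on the integrand
  have hpoint : ∀ s ∈ Set.Icc (0:ℝ) R₁,
      (∫ t in (0:ℝ)..s, φ t) / φ s ≤ G * (Real.exp 2 * Real.exp (L * s^2 / 8)) := by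
    intro s hs
    have hφs := hpos s hs
    have hinv : (φ s)⁻¹ ≤ Real.exp 2 * Real.exp (L * s^2 / 8) := by
      rw [← Real.exp_add]
      have h := hlow s hs
      rw [← Real.exp_add] at h
      calc (φ s)⁻¹ ≤ (Real.exp (-2 + -L * s^2 / 8))⁻¹ :=
            inv_anti₀ (Real.exp_pos _) h
        _ = Real.exp (2 + L * s^2 / 8) := by
            rw [← Real.exp_neg]; ring_nf
    have hΦnn : 0 ≤ (∫ t in (0:ℝ)..s, φ t) :=
      intervalIntegral.integral_nonneg hs.1 (fun t ht => (hpos t ⟨ht.1, ht.2.trans hs.2⟩).le)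
    calc (∫ t in (0:ℝ)..s, φ t) / φ s = (∫ t in (0:ℝ)..s, φ t) * (φ s)⁻¹ := div_eq_mul_inv _ _
      _ ≤ G * (Real.exp 2 * Real.exp (L * s^2 / 8)) :=
          mul_le_mul (hΦleG s hs) hinv (inv_nonneg.mpr hφs.le) hGnn
  -- integrability of the LHS integrand
  have hΦcont : ContinuousOn (fun s => ∫ t in (0:ℝ)..s, φ t) (Set.Icc 0 R₁) := by
    have h := intervalIntegral.continuousOn_primitive_interval
      (f := φ) (a := 0) (b := R₁) (μ := volume) ?_
    · rwa [Set.uIcc_of_le hR₁.le] at h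
    · rw [Set.uIcc_of_le hR₁.le]
      exact hcont.integrableOn_Icc
  have hLHSint : IntervalIntegrable (fun s => (∫ t in (0:ℝ)..s, φ t) / φ s) volume 0 R₁ := by
    apply ContinuousOn.intervalIntegrable
    rw [Set.uIcc_of_le hR₁.le]
    exact hΦcont.div hcont (fun s hs => (hpos s hs).ne')
  -- main estimate
  have step1 : (∫ s in (0:ℝ)..R₁, (∫ t in (0:ℝ)..s, φ t) / φ s) ≤
      ∫ s in (0:ℝ)..R₁, G * (Real.exp 2 * Real.exp (L * s^2 / 8)) :=
    intervalIntegral.integral_mono_on hR₁.le hLHSint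
      (Continuous.intervalIntegrable (by fun_prop) 0 R₁) hpoint
  have step2 : (∫ s in (0:ℝ)..R₁, G * (Real.exp 2 * Real.exp (L * s^2 / 8))) =
      G * Real.exp 2 * ∫ s in (0:ℝ)..R₁, Real.exp (L * s^2 / 8) := by
    rw [← intervalIntegral.integral_const_mul]
    congr 1; ext s; ring
  -- bound ∫ exp(L s²/8) by ∫ exp(L R₁ s /8)
  have step3 : (∫ s in (0:ℝ)..R₁, Real.exp (L * s^2 / 8)) ≤ 8 / (L * R₁) * Real.exp Λ := by
    have c_pos : 0 < L * R₁ / 8 := by positivity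
    have h1 : (∫ s in (0:ℝ)..R₁, Real.exp (L * s^2 / 8)) ≤
        ∫ s in (0:ℝ)..R₁, Real.exp (L * R₁ / 8 * s) := by
      apply intervalIntegral.integral_mono_on hR₁.le
        (Continuous.intervalIntegrable (by fun_prop) 0 R₁)
        (Continuous.intervalIntegrable (by fun_prop) 0 R₁)
      intro s hs
      apply Real.exp_le_exp.mpr
      nlinarith [hs.1, hs.2, sq_nonneg s, mul_le_mul_of_nonneg_left hs.2 (mul_nonneg hL.le hs.1)]
    have h2 : (∫ s in (0:ℝ)..R₁, Real.exp (L * R₁ / 8 * s)) =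
        (L * R₁ / 8)⁻¹ * (Real.exp (L * R₁ / 8 * R₁) - 1) := by
      rw [integral_comp_mul_left (fun x => Real.exp x) c_pos.ne']
      simp [Real.exp_zero]
    have h3 : L * R₁ / 8 * R₁ = Λ := by rw [hΛ]; ring
    calc (∫ s in (0:ℝ)..R₁, Real.exp (L * s^2 / 8)) ≤
        (L * R₁ / 8)⁻¹ * (Real.exp Λ - 1) := by rw [← h3, ← h2]; exact h1
      _ ≤ 8 / (L * R₁) * Real.exp Λ := by
          rw [show (L * R₁ / 8)⁻¹ = 8 / (L * R₁) by field_simp]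
          have : (0:ℝ) < 8 / (L * R₁) := by positivity
          nlinarith [Real.exp_pos Λ]
  -- gaussian bound: G ≤ sqrt(2π/L)
  have step4 : G ≤ Real.sqrt (2 * Real.pi / L) := by
    have hb : 0 < L / 8 := by positivity
    have hint : IntegrableOn (fun t => Real.exp (-(L/8) * t^2)) (Set.Ioi 0) volume :=
      (integrable_exp_neg_mul_sq hb).integrableOn
    have hGrw : G = ∫ t in Set.Ioc (0:ℝ) R₁, Real.exp (-(L/8) * t^2) := by
      rw [hG, intervalIntegral.integral_of_le hR₁.le]
      congr 1; ext t; ring_nf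
    rw [hGrw]
    calc (∫ t in Set.Ioc (0:ℝ) R₁, Real.exp (-(L/8) * t^2)) ≤
        ∫ t in Set.Ioi (0:ℝ), Real.exp (-(L/8) * t^2) := by
          apply setIntegral_mono_set hint
          · filter_upwards with t using (Real.exp_pos _).le
          · exact (Set.Ioc_subset_Ioi_self).eventuallyLE
      _ = Real.sqrt (Real.pi / (L/8)) / 2 := integral_gaussian_Ioi _
      _ ≤ Real.sqrt (2 * Real.pi / L) := by
          rw [show Real.pi / (L/8) = 4 * (2 * Real.pi / L) by field_simp; ring,
            Real.sqrt_mul (by norm_num), show Real.sqrt 4 = 2 by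
              rw [show (4:ℝ) = 2^2 by norm_num, Real.sqrt_sq (by norm_num)]]
          ring_nf; exact le_rfl
  -- constant arithmetic
  have hconst : Real.sqrt (2 * Real.pi / L) * Real.exp 2 * (8 / (L * R₁) * Real.exp Λ) =
      4 * Real.sqrt Real.pi * Real.exp 2 * L⁻¹ * (Real.sqrt Λ)⁻¹ * Real.exp Λ := by
    have key : Real.sqrt (2 * Real.pi / L) * (8 / (L * R₁)) =
        4 * Real.sqrt Real.pi * L⁻¹ * (Real.sqrt Λ)⁻¹ := by
      have s1 : Real.sqrt (2 * Real.pi / L) =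
          Real.sqrt 2 * Real.sqrt Real.pi / Real.sqrt L := by
        rw [Real.sqrt_div (by positivity), Real.sqrt_mul (by norm_num)]
      have s2 : Real.sqrt Λ = Real.sqrt L * R₁ / (2 * Real.sqrt 2) := by
        rw [hΛ, Real.sqrt_div (by positivity), Real.sqrt_mul hL.le,
          Real.sqrt_sq hR₁.le, show (8:ℝ) = 4 * 2 by norm_num,
          Real.sqrt_mul (by norm_num : (0:ℝ) ≤ 4),
          show Real.sqrt 4 = 2 by
            rw [show (4:ℝ) = 2^2 by norm_num, Real.sqrt_sq (by norm_num)]]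
      have m2 : Real.sqrt 2 * Real.sqrt 2 = 2 := Real.mul_self_sqrt (by norm_num)
      have mL : Real.sqrt L * Real.sqrt L = L := Real.mul_self_sqrt hL.le
      have n2 : Real.sqrt 2 ≠ 0 := by positivity
      have nL : Real.sqrt L ≠ 0 := Real.sqrt_ne_zero'.mpr hL
      rw [s1, s2]
      field_simp
      nlinarith [m2, mL, Real.sqrt_nonneg Real.pi, Real.sqrt_nonneg 2,
        Real.sqrt_nonneg L, hL, hR₁]
    calc Real.sqrt (2 * Real.pi / L) * Real.exp 2 * (8 / (L * R₁) * Real.exp Λ)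
        = (Real.sqrt (2 * Real.pi / L) * (8 / (L * R₁))) * Real.exp 2 * Real.exp Λ := by ring
      _ = 4 * Real.sqrt Real.pi * Real.exp 2 * L⁻¹ * (Real.sqrt Λ)⁻¹ * Real.exp Λ := by
          rw [key]; ring
  calc (∫ s in (0:ℝ)..R₁, (∫ t in (0:ℝ)..s, φ t) / φ s)
      ≤ G * Real.exp 2 * ∫ s in (0:ℝ)..R₁, Real.exp (L * s^2 / 8) := by rw [← step2]; exact step1
    _ ≤ G * Real.exp 2 * (8 / (L * R₁) * Real.exp Λ) := by
        apply mul_le_mul_of_nonneg_left step3 (by positivity)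
    _ ≤ Real.sqrt (2 * Real.pi / L) * Real.exp 2 * (8 / (L * R₁) * Real.exp Λ) := by
        apply mul_le_mul_of_nonneg_right (mul_le_mul_of_nonneg_right step4 (Real.exp_pos 2).le)
          (by positivity)
    _ = _ := hconst
end

section
/- Let φ(s) = e^{−βs²} with β ≥ L/8, and Φ(r) = ∫₀^r φ. Suppose Λ := LR₁²/8 ≥ 1 and φ(r) ≥ e⁻²e^{−Lr²/8} on [0,R₁]. Then for all r ∈ (0,R₁], rφ(r)/Φ(r) ≥ 2π^{−1/2}e⁻²Λ^{1/2}e^{−Λ}. -/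
open MeasureTheory

lemma sqrt_exp_anti {a b : ℝ} (ha : 1/2 ≤ a) (hab : a ≤ b) :
    Real.sqrt b * Real.exp (-b) ≤ Real.sqrt a * Real.exp (-a) := by
  have ha0 : (0:ℝ) ≤ a := by linarith
  have hx : 0 ≤ b - a := by linarith
  have key : b ≤ (Real.sqrt a * Real.exp (b - a))^2 := by
    have h1 : (Real.sqrt a * Real.exp (b-a))^2 = a * Real.exp (2*(b-a)) := by
      rw [mul_pow, Real.sq_sqrt ha0, ← Real.exp_nat_mul]
      norm_num
    rw [h1]
    have h2 : 1 + 2*(b-a) ≤ Real.exp (2*(b-a)) := by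
      have := Real.add_one_le_exp (2*(b-a)); linarith
    nlinarith [Real.exp_pos (2*(b-a))]
  have h3 : Real.sqrt b ≤ Real.sqrt a * Real.exp (b - a) := by
    calc Real.sqrt b ≤ Real.sqrt ((Real.sqrt a * Real.exp (b - a))^2) :=
          Real.sqrt_le_sqrt key
      _ = Real.sqrt a * Real.exp (b - a) := Real.sqrt_sq (by positivity)
  calc Real.sqrt b * Real.exp (-b) ≤ (Real.sqrt a * Real.exp (b - a)) * Real.exp (-b) := by
        gcongr
    _ = Real.sqrt a * Real.exp (-a) := by
        rw [mul_assoc, ← Real.exp_add]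
        congr 1
        ring

set_option maxHeartbeats 1000000 in
theorem r_phi_over_Phi_lower_bound
    (L R₁ β : ℝ) (hL : 0 < L) (hR₁ : 0 < R₁) (hβ : β ≥ L / 8)
    (Λ : ℝ) (hΛ : Λ = L * R₁^2 / 8) (hΛ1 : 1 ≤ Λ)
    (φ : ℝ → ℝ) (hφ : ∀ s, φ s = Real.exp (-β * s^2))
    (hlow : ∀ s ∈ Set.Icc (0:ℝ) R₁,
      Real.exp (-2) * Real.exp (-L * s^2 / 8) ≤ φ s) :
    ∀ r ∈ Set.Ioc (0:ℝ) R₁,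
      r * φ r / (∫ s in (0:ℝ)..r, φ s) ≥
        2 * (Real.sqrt Real.pi)⁻¹ * Real.exp (-2) * Real.sqrt Λ *
          Real.exp (-Λ) := by
  intro r hr
  obtain ⟨hr0, hrR⟩ := hr
  have hπ := Real.pi_pos
  have hβ0 : 0 < β := lt_of_lt_of_le (by linarith) hβ
  have hsπ : (0:ℝ) < Real.sqrt Real.pi := Real.sqrt_pos.mpr hπ
  -- integral facts
  have hcont : Continuous (fun s : ℝ => Real.exp (-β * s^2)) := by continuity
  have hφeq : (fun s : ℝ => φ s) = fun s => Real.exp (-β * s^2) := funext hφ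
  have hint : IntervalIntegrable (fun s => Real.exp (-β * s^2)) volume 0 r :=
    hcont.intervalIntegrable 0 r
  set I : ℝ := ∫ s in (0:ℝ)..r, φ s with hI
  have hIval : I = ∫ s in (0:ℝ)..r, Real.exp (-β * s^2) := by
    rw [hI]; congr 1
  have hIpos : 0 < I := by
    rw [hIval]
    exact intervalIntegral.intervalIntegral_pos_of_pos hint (fun x => Real.exp_pos _) hr0
  have hIr : I ≤ r := by
    rw [hIval]
    have h1 : (∫ s in (0:ℝ)..r, Real.exp (-β * s^2)) ≤ ∫ _ in (0:ℝ)..r, (1:ℝ) := by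
      apply intervalIntegral.integral_mono_on hr0.le hint intervalIntegrable_const
      intro x hx
      rw [Real.exp_le_one_iff]
      nlinarith [sq_nonneg x, hx.1]
    simpa using h1
  have hIgauss : I ≤ Real.sqrt (2 * Real.pi / L) := by
    have h1 : I ≤ ∫ s in Set.Ioi (0:ℝ), Real.exp (-β * s^2) := by
      rw [hIval, intervalIntegral.integral_of_le hr0.le]
      apply setIntegral_mono_set ((integrable_exp_neg_mul_sq hβ0).integrableOn)
      · filter_upwards with x using (Real.exp_pos _).le
      · exact HasSubset.Subset.eventuallyLE Set.Ioc_subset_Ioi_self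
    rw [integral_gaussian_Ioi] at h1
    have h2 : Real.sqrt (Real.pi / β) ≤ Real.sqrt (4 * (2 * Real.pi / L)) := by
      apply Real.sqrt_le_sqrt
      rw [div_le_iff₀ hβ0]
      have : (4 * (2 * Real.pi / L)) * β = 8 * Real.pi * β / L := by ring
      rw [this, le_div_iff₀ hL]
      nlinarith
    have h3 : Real.sqrt (4 * (2 * Real.pi / L)) = 2 * Real.sqrt (2 * Real.pi / L) := by
      rw [show (4:ℝ) * (2 * Real.pi / L) = (2:ℝ)^2 * (2 * Real.pi / L) by norm_num,
        Real.sqrt_mul (by positivity), Real.sqrt_sq (by norm_num)]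
    linarith
  -- lower bound on φ r
  have hφr : Real.exp (-2) * Real.exp (-(L * r^2 / 8)) ≤ φ r := by
    have := hlow r ⟨hr0.le, hrR⟩
    have he : -L * r^2 / 8 = -(L * r^2 / 8) := by ring
    rwa [he] at this
  set a : ℝ := L * r^2 / 8 with ha
  have ha0 : 0 < a := by positivity
  have haΛ : a ≤ Λ := by
    rw [ha, hΛ]
    have : r^2 ≤ R₁^2 := by nlinarith
    nlinarith
  rw [ge_iff_le]
  rcases le_or_gt a (1/2) with hcase | hcase
  · -- small r : use I ≤ r
    have hφrpos : 0 < φ r := by rw [hφ]; exact Real.exp_pos _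
    have step1 : φ r ≤ r * φ r / I := by
      rw [le_div_iff₀ hIpos]
      nlinarith
    have hbig : Real.sqrt Λ * Real.exp (-Λ) ≤ Real.exp (-1 : ℝ) := by
      have := sqrt_exp_anti (a := 1) (b := Λ) (by norm_num) hΛ1
      simpa using this
    -- numeric: 2/√π * exp(-1) ≤ exp(-1/2)
    have hnum : 2 * (Real.sqrt Real.pi)⁻¹ * Real.exp (-1 : ℝ) ≤ Real.exp (-(1/2) : ℝ) := by
      have he2 : (3/2:ℝ) ≤ Real.exp (1/2 : ℝ) := by
        have := Real.add_one_le_exp (1/2 : ℝ); linarith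
      have hp : (4/3:ℝ) ≤ Real.sqrt Real.pi := by
        rw [show (4/3:ℝ) = Real.sqrt ((4/3)^2) from (Real.sqrt_sq (by norm_num)).symm]
        apply Real.sqrt_le_sqrt
        nlinarith [Real.pi_gt_three]
      have hexp1 : Real.exp (-1:ℝ) = Real.exp (-(1/2):ℝ) * Real.exp (-(1/2):ℝ) := by
        rw [← Real.exp_add]; norm_num
      have hinv : (Real.sqrt Real.pi)⁻¹ ≤ 3/4 := by
        rw [inv_le_comm₀ (by positivity) (by norm_num)]
        linarith
      have hh : Real.exp (-(1/2):ℝ) ≤ 2/3 := by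
        rw [Real.exp_neg]
        rw [inv_le_comm₀ (Real.exp_pos _) (by norm_num)]
        calc (2/3:ℝ)⁻¹ = 3/2 := by norm_num
          _ ≤ Real.exp (1/2:ℝ) := he2
      have h1 : 2 * (Real.sqrt Real.pi)⁻¹ ≤ 3/2 := by linarith
      have key : 2 * (Real.sqrt Real.pi)⁻¹ * Real.exp (-(1/2):ℝ) ≤ 1 := by
        calc 2 * (Real.sqrt Real.pi)⁻¹ * Real.exp (-(1/2):ℝ)
            ≤ (3/2) * (2/3 : ℝ) :=
              mul_le_mul h1 hh (Real.exp_pos _).le (by norm_num)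
          _ = 1 := by norm_num
      calc 2 * (Real.sqrt Real.pi)⁻¹ * Real.exp (-1:ℝ)
          = (2 * (Real.sqrt Real.pi)⁻¹ * Real.exp (-(1/2):ℝ)) * Real.exp (-(1/2):ℝ) := by
            rw [hexp1]; ring
        _ ≤ 1 * Real.exp (-(1/2):ℝ) := by
            gcongr
        _ = Real.exp (-(1/2):ℝ) := by ring
    have hexpa : Real.exp (-(1/2):ℝ) ≤ Real.exp (-a) := by
      apply Real.exp_le_exp.mpr; linarith
    calc 2 * (Real.sqrt Real.pi)⁻¹ * Real.exp (-2) * Real.sqrt Λ * Real.exp (-Λ)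
        = Real.exp (-2) * (2 * (Real.sqrt Real.pi)⁻¹ * (Real.sqrt Λ * Real.exp (-Λ))) := by
          ring
      _ ≤ Real.exp (-2) * (2 * (Real.sqrt Real.pi)⁻¹ * Real.exp (-1:ℝ)) := by
          gcongr
      _ ≤ Real.exp (-2) * Real.exp (-(1/2):ℝ) := by
          gcongr
      _ ≤ Real.exp (-2) * Real.exp (-a) := by
          gcongr
      _ ≤ φ r := hφr
      _ ≤ r * φ r / I := step1
  · -- large r : use I ≤ √(2π/L)
    have hreq : r / Real.sqrt (2 * Real.pi / L) = 2 * (Real.sqrt Real.pi)⁻¹ * Real.sqrt a := by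
      have hs1 : (0:ℝ) < Real.sqrt (2 * Real.pi / L) := Real.sqrt_pos.mpr (by positivity)
      have hlhs : 0 ≤ r / Real.sqrt (2 * Real.pi / L) := by positivity
      have hrhs : 0 ≤ 2 * (Real.sqrt Real.pi)⁻¹ * Real.sqrt a := by positivity
      have hsq : (r / Real.sqrt (2 * Real.pi / L))^2
          = (2 * (Real.sqrt Real.pi)⁻¹ * Real.sqrt a)^2 := by
        rw [div_pow, mul_pow, mul_pow, Real.sq_sqrt (by positivity : (0:ℝ) ≤ 2*Real.pi/L),
          Real.sq_sqrt ha0.le]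
        rw [show ((Real.sqrt Real.pi)⁻¹)^2 = ((Real.sqrt Real.pi)^2)⁻¹ by
          rw [inv_pow], Real.sq_sqrt hπ.le]
        rw [ha]
        field_simp
        ring
      calc r / Real.sqrt (2 * Real.pi / L)
          = Real.sqrt ((r / Real.sqrt (2 * Real.pi / L))^2) := (Real.sqrt_sq hlhs).symm
        _ = Real.sqrt ((2 * (Real.sqrt Real.pi)⁻¹ * Real.sqrt a)^2) := by rw [hsq]
        _ = 2 * (Real.sqrt Real.pi)⁻¹ * Real.sqrt a := Real.sqrt_sq hrhs
    have hanti : Real.sqrt Λ * Real.exp (-Λ) ≤ Real.sqrt a * Real.exp (-a) :=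
      sqrt_exp_anti hcase.le haΛ
    have hs1 : (0:ℝ) < Real.sqrt (2 * Real.pi / L) := Real.sqrt_pos.mpr (by positivity)
    calc 2 * (Real.sqrt Real.pi)⁻¹ * Real.exp (-2) * Real.sqrt Λ * Real.exp (-Λ)
        = Real.exp (-2) * (2 * (Real.sqrt Real.pi)⁻¹ * (Real.sqrt Λ * Real.exp (-Λ))) := by
          ring
      _ ≤ Real.exp (-2) * (2 * (Real.sqrt Real.pi)⁻¹ * (Real.sqrt a * Real.exp (-a))) := by
          gcongr
      _ = (r / Real.sqrt (2 * Real.pi / L)) * (Real.exp (-2) * Real.exp (-a)) := by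
          rw [hreq]; ring
      _ ≤ (r / Real.sqrt (2 * Real.pi / L)) * φ r := by
          have h0 : 0 ≤ r / Real.sqrt (2 * Real.pi / L) := by positivity
          exact mul_le_mul_of_nonneg_left hφr h0
      _ = r * φ r / Real.sqrt (2 * Real.pi / L) := by ring
      _ ≤ r * φ r / I := by
          gcongr
          have : 0 ≤ φ r := by rw [hφ]; exact (Real.exp_pos _).le
          positivity
end
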